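/- arXiv:2308.05706 — 3 statements merged into one kernel-verified Lean document; each statement's English description precedes it below -/
import Mathlib

section
/- Let k be a field and H a Hopf algebra over k. The assignments Ψ(I) := H^{co H/I} and Φ(B) := HB⁺ are mutually inverse, inclusion-preserving bijections between (1) the set of left ideal coideals I of H satisfying the coequalizer condition, i.e. I equals the subspace of H spanned by {Σᵢ ε(xᵢ)yᵢ − Σᵢ xᵢε(yᵢ) : Σᵢ xᵢ ⊗ yᵢ ∈ H □^{H/I} H}, and (2) the set of right coideal subalgebras B of H satisfying the equalizer condition, i.e. B = {h ∈ H : h ⊗ 1 − 1 ⊗ h ∈ J_B}. -/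
/-!
Everything is transported along the Galois map `β(x ⊗ y) = ∑ x₍₁₎ ⊗ x₍₂₎ y` of `H ⊗ H`. More
generally, for an algebra map `ρ : H → End M` the map `x ⊗ m ↦ ∑ x₍₁₎ ⊗ ρ(x₍₂₎) m` is bijective:
`f ↦ (x ⊗ m ↦ ∑ x₍₁₎ ⊗ f(x₍₂₎) m)` turns convolution into composition, and `ρ` has convolution
inverse `ρ ∘ S`.

For a right coideal subalgebra `B`, `β` maps `J_B` onto `HB⁺ ⊗ H`: `Δb - 1 ⊗ b ∈ B⁺ ⊗ H` and
`β(xb ⊗ y - x ⊗ by) = Δx (Δb - 1 ⊗ b)(1 ⊗ y)`, while conversely `β⁻¹(gb ⊗ v) ∈ J_B` for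
`b ∈ B⁺`. Hence `h ⊗ 1 - 1 ⊗ h ∈ J_B` iff
`Δh - 1 ⊗ h ∈ HB⁺ ⊗ H`, i.e. the equalizer of `H ⇉ H ⊗_B H` is `H^{co H/HB⁺}`.
For a left ideal `I`, both coactions on `β(H ⊗ H)` are conjugate under the bijective diagonal
twist of `H ⊗ (H/I ⊗ H)` to `id ⊗ (π ⊗ id)Δ` and `id ⊗ (π(1) ⊗ -)`, so by flatness over `k` the
cotensor product is `β(H ⊗ H^{co H/I})`; as `ε ⊗ id - id ⊗ ε` sends `β(g ⊗ c)` to `g (c - ε(c))`,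
the coequalizer subspace is `H (H^{co H/I})⁺`. So the two conditions say exactly `ΨΦ(B) = B` and
`ΦΨ(I) = I`.
-/

open TensorProduct

noncomputable section

namespace HopfGalois

variable (k : Type*) (H : Type*) [Field k] [Ring H] [HopfAlgebra k H]

/-- The linear map `H ⊗ H → H`, `x ⊗ y ↦ ε(x) • y`. -/
def epsTensorId : H ⊗[k] H →ₗ[k] H :=
  (TensorProduct.lid k H).toLinearMap ∘ₗ
    TensorProduct.map (Coalgebra.counit : H →ₗ[k] k) (LinearMap.id : H →ₗ[k] H)

/-- The linear map `H ⊗ H → H`, `x ⊗ y ↦ ε(y) • x`. -/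
def idTensorEps : H ⊗[k] H →ₗ[k] H :=
  (TensorProduct.rid k H).toLinearMap ∘ₗ
    TensorProduct.map (LinearMap.id : H →ₗ[k] H) (Coalgebra.counit : H →ₗ[k] k)

/-- `x ⊗ y ↦ Σ x₍₁₎ ⊗ π_I(x₍₂₎) ⊗ y`. -/
def cotensorL (I : Submodule k H) : H ⊗[k] H →ₗ[k] H ⊗[k] ((H ⧸ I) ⊗[k] H) :=
  TensorProduct.map (LinearMap.id : H →ₗ[k] H)
      (TensorProduct.map I.mkQ (LinearMap.id : H →ₗ[k] H))
    ∘ₗ (TensorProduct.assoc k H H H).toLinearMap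
    ∘ₗ TensorProduct.map (Coalgebra.comul : H →ₗ[k] H ⊗[k] H) (LinearMap.id : H →ₗ[k] H)

/-- `x ⊗ y ↦ Σ x ⊗ π_I(y₍₁₎) ⊗ y₍₂₎`. -/
def cotensorR (I : Submodule k H) : H ⊗[k] H →ₗ[k] H ⊗[k] ((H ⧸ I) ⊗[k] H) :=
  TensorProduct.map (LinearMap.id : H →ₗ[k] H)
    (TensorProduct.map I.mkQ (LinearMap.id : H →ₗ[k] H)
      ∘ₗ (Coalgebra.comul : H →ₗ[k] H ⊗[k] H))

/-- The cotensor product `H □^{H/I} H` as a subspace of `H ⊗ H`. -/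
def cotensor (I : Submodule k H) : Submodule k (H ⊗[k] H) :=
  LinearMap.ker (cotensorL k H I - cotensorR k H I)

/-- The subspace of coinvariants `H^{co H/I}`:
`{x ∈ H : Σ π_I(x₍₁₎) ⊗ x₍₂₎ = π_I(1) ⊗ x}`. -/
def coinv (I : Submodule k H) : Submodule k H :=
  LinearMap.ker
    ((TensorProduct.map I.mkQ (LinearMap.id : H →ₗ[k] H)
        ∘ₗ (Coalgebra.comul : H →ₗ[k] H ⊗[k] H))
      - TensorProduct.mk k (H ⧸ I) H (I.mkQ 1))

/-- A left ideal coideal: a left ideal `I` with `ε(I) = 0` and `Δ(I) ⊆ I ⊗ H + H ⊗ I`. -/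
structure IsLeftIdealCoideal (I : Submodule k H) : Prop where
  mul_mem_left : ∀ (h x : H), x ∈ I → h * x ∈ I
  counit_zero : ∀ x ∈ I, (Coalgebra.counit : H →ₗ[k] k) x = 0
  comul_mem : ∀ x ∈ I, (Coalgebra.comul : H →ₗ[k] H ⊗[k] H) x ∈
    LinearMap.range (TensorProduct.map I.subtype (LinearMap.id : H →ₗ[k] H)) ⊔
      LinearMap.range (TensorProduct.map (LinearMap.id : H →ₗ[k] H) I.subtype)

/-- A right coideal subalgebra: a subalgebra `B` with `Δ(B) ⊆ B ⊗ H`. -/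
def IsRightCoidealSubalgebra (B : Subalgebra k H) : Prop :=
  ∀ b ∈ B, (Coalgebra.comul : H →ₗ[k] H ⊗[k] H) b ∈
    LinearMap.range
      (TensorProduct.map (Subalgebra.toSubmodule B).subtype (LinearMap.id : H →ₗ[k] H))

/-- The left ideal of `H` generated by a subset `S`, as a `k`-subspace of `H`. -/
def leftIdealGen (S : Set H) : Submodule k H :=
  Submodule.span k {z : H | ∃ h : H, ∃ b ∈ S, z = h * b}

/-- `S⁺ = S ∩ ker ε`. -/
def plusPart (S : Set H) : Set H :=
  {b ∈ S | (Coalgebra.counit : H →ₗ[k] k) b = 0}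

/-- `H·S⁺`, the left ideal of `H` generated by `S ∩ ker ε`. -/
def HSplus (S : Set H) : Submodule k H :=
  leftIdealGen k H (plusPart k H S)

/-- The subspace `J_B ⊆ H ⊗ H` spanned by `{xb ⊗ y − x ⊗ by : x, y ∈ H, b ∈ B}`,
so that `H ⊗_B H = (H ⊗ H)/J_B`. -/
def JB (S : Set H) : Submodule k (H ⊗[k] H) :=
  Submodule.span k
    {z : H ⊗[k] H | ∃ x y : H, ∃ b ∈ S, z = (x * b) ⊗ₜ[k] y - x ⊗ₜ[k] (b * y)}

/-- `B` is the equalizer of the two canonical maps `H → H ⊗_B H`. -/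
def equalizerCond (S : Set H) : Prop :=
  {h : H | h ⊗ₜ[k] (1 : H) - (1 : H) ⊗ₜ[k] h ∈ JB k H S} = S

/-- `H/I` is the coequalizer of `ε ⊗ id` and `id ⊗ ε` restricted to `H □^{H/I} H`, i.e.
`I` is the subspace spanned by `{Σ ε(xᵢ)yᵢ − Σ xᵢε(yᵢ) : Σ xᵢ ⊗ yᵢ ∈ H □^{H/I} H}`. -/
def coequalizerCond (I : Submodule k H) : Prop :=
  I = Submodule.map (epsTensorId k H - idTensorEps k H) (cotensor k H I)

open Coalgebra HopfAlgebra WithConv LinearMap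

variable {k H}

section Twist

variable {R C M N : Type*} [CommSemiring R] [AddCommMonoid C] [Module R C] [Coalgebra R C]
  [AddCommMonoid M] [Module R M] [AddCommMonoid N] [Module R N]

lemma sum_counit_right_smul {ι : Type*} {x : C} (𝓡 : Repr R x ι) :
    ∑ i ∈ 𝓡.index, counit (R := R) (𝓡.right i) • 𝓡.left i = x := by
  simpa only [map_sum, TensorProduct.rid_tmul, one_smul] using
    congr(TensorProduct.rid R C $(sum_tmul_counit_eq 𝓡))

/-- `x ⊗ m ↦ ∑ x₍₁₎ ⊗ f(x₍₂₎) m`. -/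
def twistMap (f : C →ₗ[R] Module.End R M) : Module.End R (C ⊗[R] M) :=
  (TensorProduct.lift f).lTensor C ∘ₗ (TensorProduct.assoc R C C M).toLinearMap ∘ₗ
    comul.rTensor M

lemma twistMap_tmul {ι : Type*} {x : C} (𝓡 : Repr R x ι) (f : C →ₗ[R] Module.End R M)
    (m : M) : twistMap f (x ⊗ₜ m) = ∑ i ∈ 𝓡.index, 𝓡.left i ⊗ₜ f (𝓡.right i) m := by
  simp [twistMap, ← 𝓡.eq, TensorProduct.sum_tmul]

lemma twistMap_one : twistMap (1 : WithConv (C →ₗ[R] Module.End R M)).ofConv = 1 := by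
  refine TensorProduct.ext' fun x m => ?_
  simp only [twistMap_tmul (ℛ R x), LinearMap.convOne_def, ofConv_toConv, comp_apply,
    Algebra.linearMap_apply, Module.algebraMap_end_apply, TensorProduct.tmul_smul,
    TensorProduct.smul_tmul', ← TensorProduct.sum_tmul, sum_counit_right_smul, Module.End.one_apply]

lemma twistMap_convMul (f g : WithConv (C →ₗ[R] Module.End R M)) :
    twistMap (f * g).ofConv = twistMap f.ofConv * twistMap g.ofConv := by
  refine TensorProduct.ext' fun x m => ?_
  let r := ℛ R x
  -- coassociativity, read through `x₁ ⊗ x₂ ⊗ x₃ ↦ x₁ ⊗ f(x₂) (g(x₃) m)`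
  have := congr(TensorProduct.map LinearMap.id (TensorProduct.lift
    (((LinearMap.mul R (Module.End R M)).compl₁₂ f.ofConv g.ofConv).compr₂ (applyₗ m)))
    $(sum_tmul_tmul_eq r (fun i => ℛ R (r.left i)) (fun i => ℛ R (r.right i))))
  simp only [map_sum, TensorProduct.map_tmul, id_coe, id_eq, TensorProduct.lift.tmul,
    compr₂_apply, compl₁₂_apply, mul_apply', applyₗ_apply_apply, Module.End.mul_apply] at this
  simpa [twistMap_tmul r, twistMap_tmul (ℛ R _), (ℛ R _).convMul_apply, map_sum,
    TensorProduct.tmul_sum] using this.symm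

lemma lTensor_comp_twistMap {f : C →ₗ[R] Module.End R M} {g : C →ₗ[R] Module.End R N}
    (ψ : M →ₗ[R] N) (hψ : ∀ a, ψ ∘ₗ f a = g a ∘ₗ ψ) :
    ψ.lTensor C ∘ₗ twistMap f = twistMap g ∘ₗ ψ.lTensor C := by
  have h a m : ψ (f a m) = g a (ψ m) := LinearMap.congr_fun (hψ a) m
  refine TensorProduct.ext' fun x m => ?_
  simp [twistMap_tmul (ℛ R x), h]

end Twist

section Antipode

variable {R A M : Type*} [CommSemiring R] [Semiring A] [HopfAlgebra R A]
  [AddCommMonoid M] [Module R M]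

lemma algHom_comp_convOne {B : Type*} [Semiring B] [Algebra R B] (ρ : A →ₐ[R] B) :
    ρ.toLinearMap ∘ₗ (1 : WithConv (A →ₗ[R] A)).ofConv = (1 : WithConv (A →ₗ[R] B)).ofConv := by
  ext a
  simp [LinearMap.convOne_def]

lemma twistMap_antipode_leftInverse (ρ : A →ₐ[R] Module.End R M) :
    Function.LeftInverse (twistMap (ρ.toLinearMap ∘ₗ antipode R)) (twistMap ρ.toLinearMap) := by
  intro z
  have h := algHom_comp_convMul_distrib ρ (toConv (antipode R)) (toConv LinearMap.id)
  rw [antipode_mul_id, algHom_comp_convOne, ofConv_toConv, ofConv_toConv, comp_id] at h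
  rw [← Module.End.mul_apply, ← twistMap_convMul, ← h, twistMap_one, Module.End.one_apply]

lemma twistMap_antipode_rightInverse (ρ : A →ₐ[R] Module.End R M) :
    Function.RightInverse (twistMap (ρ.toLinearMap ∘ₗ antipode R)) (twistMap ρ.toLinearMap) := by
  intro z
  have h := algHom_comp_convMul_distrib ρ (toConv LinearMap.id) (toConv (antipode R))
  rw [id_mul_antipode, algHom_comp_convOne, ofConv_toConv, ofConv_toConv, comp_id] at h
  rw [← Module.End.mul_apply, ← twistMap_convMul, ← h, twistMap_one, Module.End.one_apply]

end Antipode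

section TensorIdeal

variable {R A M : Type*} [CommSemiring R] [Semiring A] [Algebra R A] [AddCommMonoid M] [Module R M]
  {L : Submodule R A}

lemma range_rTensor_le_of_range_le {N : Type*} [AddCommMonoid N] [Module R N] {f : N →ₗ[R] A}
    (hf : range f ≤ L) : range (f.rTensor M) ≤ range (L.subtype.rTensor M) := by
  rw [show f = L.subtype ∘ₗ f.codRestrict L (fun n => hf ⟨n, rfl⟩) from rfl, rTensor_comp]
  exact range_comp_le_range _ _

lemma mul_mem_range_rTensor_subtype (hL : ∀ a x, x ∈ L → a * x ∈ L) (u : A ⊗[R] A)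
    {w : A ⊗[R] A} (hw : w ∈ range (L.subtype.rTensor A)) :
    u * w ∈ range (L.subtype.rTensor A) := by
  obtain ⟨w, rfl⟩ := hw
  induction w using TensorProduct.induction_on with
  | zero => simp
  | add w w' hw hw' => rw [map_add, mul_add]; exact add_mem hw hw'
  | tmul l y =>
    induction u using TensorProduct.induction_on with
    | zero => simp
    | add u u' hu hu' => rw [add_mul]; exact add_mem hu hu'
    | tmul a b => exact ⟨⟨a * l, hL a l l.2⟩ ⊗ₜ (b * y), by simp⟩

lemma mul_mem_range_lTensor_subtype (hL : ∀ a x, x ∈ L → a * x ∈ L) (u : A ⊗[R] A)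
    {w : A ⊗[R] A} (hw : w ∈ range (L.subtype.lTensor A)) :
    u * w ∈ range (L.subtype.lTensor A) := by
  obtain ⟨w, rfl⟩ := hw
  induction w using TensorProduct.induction_on with
  | zero => simp
  | add w w' hw hw' => rw [map_add, mul_add]; exact add_mem hw hw'
  | tmul y l =>
    induction u using TensorProduct.induction_on with
    | zero => simp
    | add u u' hu hu' => rw [add_mul]; exact add_mem hu hu'
    | tmul a b => exact ⟨(a * y) ⊗ₜ ⟨b * l, hL b l l.2⟩, by simp⟩

lemma mul_one_tmul_mem_range_rTensor_subtype {w : A ⊗[R] A}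
    (hw : w ∈ range (L.subtype.rTensor A)) (y : A) :
    w * (1 ⊗ₜ y) ∈ range (L.subtype.rTensor A) := by
  obtain ⟨w, rfl⟩ := hw
  induction w using TensorProduct.induction_on with
  | zero => simp
  | add w w' hw hw' => rw [map_add, add_mul]; exact add_mem hw hw'
  | tmul l z => exact ⟨l ⊗ₜ (z * y), by simp⟩

end TensorIdeal

section GaloisMap

variable (R A : Type*) [CommSemiring R] [Semiring A] [HopfAlgebra R A]

/-- `x ⊗ y ↦ ∑ x₍₁₎ ⊗ x₍₂₎ y`. -/
def galoisMap : Module.End R (A ⊗[R] A) := twistMap (Algebra.lmul R A).toLinearMap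

/-- `x ⊗ y ↦ ∑ x₍₁₎ ⊗ S(x₍₂₎) y`. -/
def galoisInv : Module.End R (A ⊗[R] A) :=
  twistMap ((Algebra.lmul R A).toLinearMap ∘ₗ antipode R)

variable {R A}

lemma galoisMap_tmul (x y : A) : galoisMap R A (x ⊗ₜ y) = comul x * (1 ⊗ₜ y) := by
  rw [galoisMap, twistMap_tmul (ℛ R x), ← (ℛ R x).eq, Finset.sum_mul]
  simp [Algebra.TensorProduct.tmul_mul_tmul]

lemma galoisInv_tmul {ι : Type*} {x : A} (𝓡 : Repr R x ι) (y : A) :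
    galoisInv R A (x ⊗ₜ y) = ∑ i ∈ 𝓡.index, 𝓡.left i ⊗ₜ (antipode R (𝓡.right i) * y) := by
  simp [galoisInv, twistMap_tmul 𝓡]

lemma galoisInv_galoisMap : Function.LeftInverse (galoisInv R A) (galoisMap R A) :=
  twistMap_antipode_leftInverse _

lemma galoisMap_bijective : Function.Bijective (galoisMap R A) :=
  ⟨(twistMap_antipode_leftInverse _).injective, (twistMap_antipode_rightInverse _).surjective⟩

end GaloisMap

section GaloisMapRing

variable {R A : Type*} [CommSemiring R] [Ring A] [HopfAlgebra R A]

lemma galoisMap_tmul_one_sub_one_tmul (h : A) :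
    galoisMap R A (h ⊗ₜ 1 - 1 ⊗ₜ h) = comul h - 1 ⊗ₜ h := by
  simp [galoisMap_tmul, ← Algebra.TensorProduct.one_def]

lemma galoisMap_mul_tmul_sub_tmul_mul (x b y : A) :
    galoisMap R A ((x * b) ⊗ₜ y - x ⊗ₜ (b * y)) = comul x * (comul b - 1 ⊗ₜ b) * (1 ⊗ₜ y) := by
  simp [galoisMap_tmul, mul_sub, sub_mul, mul_assoc, Algebra.TensorProduct.tmul_mul_tmul]

end GaloisMapRing

section PlusPart

lemma sub_counit_smul_one_mem_plusPart {V : Submodule k H} (h1 : (1 : H) ∈ V) {b : H}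
    (hb : b ∈ V) : b - counit (R := k) b • 1 ∈ plusPart k H V :=
  ⟨sub_mem hb (V.smul_mem _ h1), by simp⟩

lemma mul_mem_HSplus {S : Set H} (g : H) {b : H} (hb : b ∈ plusPart k H S) :
    g * b ∈ HSplus k H S :=
  Submodule.subset_span ⟨g, b, hb, rfl⟩

lemma HSplus_mul_mem (S : Set H) (g : H) {x : H} (hx : x ∈ HSplus k H S) :
    g * x ∈ HSplus k H S := by
  induction hx using Submodule.span_induction with
  | mem z hz =>
    obtain ⟨h, b, hb, rfl⟩ := hz
    rw [← mul_assoc]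
    exact mul_mem_HSplus _ hb
  | zero => simp
  | add u v _ _ hu hv => rw [mul_add]; exact add_mem hu hv
  | smul c u _ hu => rw [mul_smul_comm]; exact Submodule.smul_mem _ c hu

lemma counit_eq_zero_of_mem_HSplus {S : Set H} {x : H} (hx : x ∈ HSplus k H S) :
    counit (R := k) x = 0 := by
  induction hx using Submodule.span_induction with
  | mem z hz =>
    obtain ⟨h, b, hb, rfl⟩ := hz
    simp [hb.2]
  | zero => simp
  | add u v _ _ hu hv => simp [hu, hv]
  | smul c u _ hu => simp [hu]

lemma HSplus_mono {S T : Set H} (h : S ⊆ T) : HSplus k H S ≤ HSplus k H T :=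
  Submodule.span_mono fun _ ⟨g, b, hb, hz⟩ => ⟨g, b, ⟨h hb.1, hb.2⟩, hz⟩

end PlusPart

lemma epsTensorId_sub_idTensorEps_galoisMap (g c : H) :
    (epsTensorId k H - idTensorEps k H) (galoisMap k H (g ⊗ₜ c)) =
      g * (c - counit (R := k) c • 1) := by
  have hL : epsTensorId k H (galoisMap k H (g ⊗ₜ c)) = g * c := by
    simp only [galoisMap, twistMap_tmul (ℛ k g), epsTensorId, map_sum, comp_apply,
      TensorProduct.map_tmul, LinearEquiv.coe_coe, TensorProduct.lid_tmul, AlgHom.toLinearMap_apply,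
      Algebra.coe_lmul_eq_mul, LinearMap.mul_apply', LinearMap.id_apply]
    simp_rw [← smul_mul_assoc, ← Finset.sum_mul, sum_counit_smul]
  have hR : idTensorEps k H (galoisMap k H (g ⊗ₜ c)) = counit (R := k) c • g := by
    simp only [galoisMap, twistMap_tmul (ℛ k g), idTensorEps, map_sum, comp_apply,
      TensorProduct.map_tmul, LinearEquiv.coe_coe, TensorProduct.rid_tmul, AlgHom.toLinearMap_apply,
      Algebra.coe_lmul_eq_mul, LinearMap.mul_apply', LinearMap.id_apply, Bialgebra.counit_mul]
    simp_rw [mul_comm _ (counit (R := k) c), mul_smul, ← Finset.smul_sum, sum_counit_right_smul]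
  rw [LinearMap.sub_apply, hL, hR, mul_sub, mul_smul_comm, mul_one]

section Coinvariants

variable {I : Submodule k H} (hI : ∀ h x, x ∈ I → h * x ∈ I)

def quotientAction : H →ₐ[k] Module.End k (H ⧸ I) :=
  AlgHom.ofLinearMap
    { toFun h := I.mapQ I (LinearMap.mulLeft k h)
        (show I ≤ I.comap (LinearMap.mulLeft k h) from fun x hx => hI h x hx)
      map_add' g h := by ext; simp [Submodule.mapQ_apply, add_mul]
      map_smul' c h := by ext; simp [Submodule.mapQ_apply] }
    (by ext; simp) (fun g h => by ext; simp [Submodule.mapQ_apply])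

@[simp]
lemma quotientAction_mk (h x : H) :
    quotientAction hI h (Submodule.Quotient.mk x) = Submodule.Quotient.mk (h * x) := rfl

def actLeft : H →ₐ[k] Module.End k ((H ⧸ I) ⊗[k] H) :=
  (Module.End.rTensorAlgHom k (H ⧸ I) H).comp (quotientAction hI)

def actRight : H →ₐ[k] Module.End k ((H ⧸ I) ⊗[k] H) :=
  (Module.End.lTensorAlgHom k H (H ⧸ I)).comp (Algebra.lmul k H)

@[simp]
lemma actLeft_tmul (h : H) (q : H ⧸ I) (y : H) :
    actLeft hI h (q ⊗ₜ y) = quotientAction hI h q ⊗ₜ y := rfl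

@[simp]
lemma actRight_tmul (h : H) (q : H ⧸ I) (y : H) : actRight h (q ⊗ₜ y) = q ⊗ₜ (h * y) := rfl

/-- The diagonal action `h · (q ⊗ y) = ∑ h₍₁₎ q ⊗ h₍₂₎ y`. -/
def diagAction : H →ₗ[k] Module.End k ((H ⧸ I) ⊗[k] H) :=
  (toConv (actLeft hI).toLinearMap * toConv (actRight (I := I)).toLinearMap).ofConv

lemma twistMap_diagAction_injective : Function.Injective (twistMap (diagAction hI)) := by
  rw [diagAction, twistMap_convMul, Module.End.coe_mul]
  exact (twistMap_antipode_leftInverse _).injective.comp (twistMap_antipode_leftInverse _).injective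

variable (I) in
def coinvMap : H →ₗ[k] (H ⧸ I) ⊗[k] H :=
  (I.mkQ.rTensor H) ∘ₗ comul - TensorProduct.mk k (H ⧸ I) H (I.mkQ 1)

lemma coinv_eq_ker : coinv k H I = ker (coinvMap I) := rfl

lemma cotensorL_comp_galoisMap :
    cotensorL k H I ∘ₗ galoisMap k H =
      twistMap (diagAction hI) ∘ₗ (TensorProduct.mk k (H ⧸ I) H (I.mkQ 1)).lTensor H := by
  have hL : cotensorL k H I =
      twistMap (actLeft hI).toLinearMap ∘ₗ (TensorProduct.mk k (H ⧸ I) H (I.mkQ 1)).lTensor H := by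
    refine TensorProduct.ext' fun x y => ?_
    simp [cotensorL, twistMap_tmul (ℛ k x), ← (ℛ k x).eq, TensorProduct.sum_tmul]
  have hR := lTensor_comp_twistMap (f := (Algebra.lmul k H).toLinearMap)
    (g := (actRight (I := I)).toLinearMap) (TensorProduct.mk k (H ⧸ I) H (I.mkQ 1))
    fun a => by ext; simp
  rw [hL, comp_assoc, galoisMap, hR, diagAction, twistMap_convMul, Module.End.mul_eq_comp,
    comp_assoc]

lemma cotensorR_comp_galoisMap :
    cotensorR k H I ∘ₗ galoisMap k H = twistMap (diagAction hI) ∘ₗ cotensorR k H I := by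
  refine lTensor_comp_twistMap _ fun a => ?_
  have key (u v : H) (t : H ⊗[k] H) : I.mkQ.rTensor H ((u ⊗ₜ v) * t) =
      actLeft hI u (actRight v (I.mkQ.rTensor H t)) := by
    induction t using TensorProduct.induction_on with
    | zero => simp
    | add t t' ht ht' => simp only [mul_add, map_add, ht, ht']
    | tmul p q => simp
  ext h
  change I.mkQ.rTensor H (comul (a * h)) = diagAction hI a (I.mkQ.rTensor H (comul h))
  rw [Bialgebra.comul_mul, diagAction, (ℛ k a).convMul_apply, ← (ℛ k a).eq, Finset.sum_mul,
    map_sum, LinearMap.sum_apply]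
  simp [key]

include hI in
lemma galoisMap_mem_cotensor_iff (z : H ⊗[k] H) :
    galoisMap k H z ∈ cotensor k H I ↔ (coinvMap I).lTensor H z = 0 := by
  have h : (cotensorL k H I - cotensorR k H I) (galoisMap k H z) =
      -twistMap (diagAction hI) ((coinvMap I).lTensor H z) := by
    rw [LinearMap.sub_apply, ← comp_apply, cotensorL_comp_galoisMap hI,
      ← comp_apply (cotensorR k H I), cotensorR_comp_galoisMap hI, coinvMap, lTensor_sub]
    simp only [comp_apply, LinearMap.sub_apply, map_sub, neg_sub]
    rfl
  rw [cotensor, mem_ker, h, neg_eq_zero,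
    LinearMap.map_eq_zero_iff _ (twistMap_diagAction_injective hI)]

include hI in
lemma cotensor_eq_range :
    cotensor k H I = range (galoisMap k H ∘ₗ (coinv k H I).subtype.lTensor H) := by
  ext t
  obtain ⟨z, rfl⟩ := galoisMap_bijective.2 t
  rw [galoisMap_mem_cotensor_iff hI, ← mem_ker,
    (Module.Flat.lTensor_exact H (exact_subtype_ker_map (coinvMap I))).linearMap_ker_eq,
    range_comp]
  exact galoisMap_bijective.1.mem_set_image.symm

lemma one_mem_coinv : (1 : H) ∈ coinv k H I := by
  simp [coinv_eq_ker, coinvMap, Algebra.TensorProduct.one_def]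

include hI in
lemma map_eps_cotensor :
    (cotensor k H I).map (epsTensorId k H - idTensorEps k H) = HSplus k H (coinv k H I) := by
  rw [cotensor_eq_range hI, ← range_comp, range_eq_map, ← TensorProduct.span_tmul_eq_top,
    Submodule.map_span]
  apply le_antisymm
  · rw [Submodule.span_le]
    rintro _ ⟨_, ⟨g, c, rfl⟩, rfl⟩
    simp only [comp_apply, lTensor_tmul, Submodule.coe_subtype,
      epsTensorId_sub_idTensorEps_galoisMap]
    exact mul_mem_HSplus g (sub_counit_smul_one_mem_plusPart one_mem_coinv c.2)
  · rw [HSplus, leftIdealGen, Submodule.span_le]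
    rintro _ ⟨g, b, hb, rfl⟩
    refine Submodule.subset_span ⟨g ⊗ₜ ⟨b, hb.1⟩, ⟨g, ⟨b, hb.1⟩, rfl⟩, ?_⟩
    change (epsTensorId k H - idTensorEps k H) (galoisMap k H (g ⊗ₜ b)) = g * b
    rw [epsTensorId_sub_idTensorEps_galoisMap, hb.2, zero_smul, sub_zero]

lemma coinvMap_apply (h : H) : coinvMap I h = I.mkQ.rTensor H (comul h - 1 ⊗ₜ h) := by
  simp [coinvMap]

lemma mem_coinv_iff {h : H} :
    h ∈ coinv k H I ↔ comul h - 1 ⊗ₜ h ∈ range (I.subtype.rTensor H) := by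
  rw [coinv_eq_ker, mem_ker, coinvMap_apply, ← mem_ker, rTensor_mkQ]

include hI in
lemma mul_mem_coinv {c d : H} (hc : c ∈ coinv k H I) (hd : d ∈ coinv k H I) :
    c * d ∈ coinv k H I := by
  rw [mem_coinv_iff] at hc hd ⊢
  have h : comul (R := k) (c * d) - 1 ⊗ₜ (c * d) =
      comul c * (comul d - 1 ⊗ₜ d) + (comul c - 1 ⊗ₜ c) * (1 ⊗ₜ d) := by
    simp [mul_sub, sub_mul, Algebra.TensorProduct.tmul_mul_tmul]
  rw [h]
  exact add_mem (mul_mem_range_rTensor_subtype hI _ hd)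
    (mul_one_tmul_mem_range_rTensor_subtype hc d)

lemma comul_mem_coinv {c : H} (hc : c ∈ coinv k H I) :
    comul c ∈ range ((coinv k H I).subtype.rTensor H) := by
  have hc' : I.mkQ.rTensor H (comul c) = I.mkQ 1 ⊗ₜ c := by
    simpa [coinv_eq_ker, coinvMap, sub_eq_zero] using hc
  let assoc := TensorProduct.assoc k (H ⧸ I) H H
  have hnat (y : (H ⊗[k] H) ⊗[k] H) : assoc ((I.mkQ.rTensor H).rTensor H y) =
      I.mkQ.rTensor (H ⊗[k] H) (TensorProduct.assoc k H H H y) :=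
    LinearMap.congr_fun (TensorProduct.ext_threefold
      (g := assoc.toLinearMap ∘ₗ (I.mkQ.rTensor H).rTensor H)
      (h := I.mkQ.rTensor (H ⊗[k] H) ∘ₗ (TensorProduct.assoc k H H H).toLinearMap)
      fun _ _ _ => rfl) y
  -- `(π ⊗ id ⊗ id)(Δ ⊗ id)Δc = (id ⊗ Δ)(π ⊗ id)Δc = π(1) ⊗ Δc`, by coassociativity
  have h1 : assoc ((I.mkQ.rTensor H ∘ₗ comul).rTensor H (comul c)) = I.mkQ 1 ⊗ₜ comul c := by
    rw [rTensor_comp, comp_apply, hnat, coassoc_apply, ← comp_apply, rTensor_comp_lTensor,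
      ← lTensor_comp_rTensor, comp_apply, hc', lTensor_tmul]
  have h2 (t : H ⊗[k] H) :
      assoc ((TensorProduct.mk k (H ⧸ I) H (I.mkQ 1)).rTensor H t) = I.mkQ 1 ⊗ₜ t :=
    LinearMap.congr_fun (TensorProduct.ext' (g := assoc.toLinearMap ∘ₗ _)
      (h := TensorProduct.mk k (H ⧸ I) (H ⊗[k] H) (I.mkQ 1)) fun _ _ => rfl) t
  rw [coinv_eq_ker,
    ← (Module.Flat.rTensor_exact H (exact_subtype_ker_map (coinvMap I))).linearMap_ker_eq, mem_ker]
  change (coinvMap I).rTensor H (comul c) = 0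
  rw [coinvMap, rTensor_sub]
  exact (LinearMap.sub_apply _ _ _).trans (sub_eq_zero.mpr (assoc.injective (h1.trans (h2 _).symm)))

lemma coinv_mono {I' : Submodule k H} (h : I ≤ I') : coinv k H I ≤ coinv k H I' := fun x hx => by
  rw [mem_coinv_iff] at hx ⊢
  exact range_rTensor_le_of_range_le (by simpa using h) hx

end Coinvariants

section CoidealSubalgebra

variable {B : Subalgebra k H} (hB : IsRightCoidealSubalgebra k H B)

include hB in
lemma exists_repr_left_mem {b : H} (hb : b ∈ B) :
    ∃ 𝓡 : Repr k b (Subalgebra.toSubmodule B × H), ∀ i ∈ 𝓡.index, 𝓡.left i ∈ B := by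
  obtain ⟨w, hw⟩ := hB b hb
  obtain ⟨T, hT⟩ := TensorProduct.exists_finset (R := k) w
  exact ⟨⟨T, fun p => p.1, Prod.snd, by simp [← hw, hT, map_sum]⟩, fun p _ => p.1.2⟩

include hB in
lemma comul_sub_one_tmul_mem {b : H} (hb : b ∈ B) :
    comul (R := k) b - 1 ⊗ₜ b ∈ range ((HSplus k H B).subtype.rTensor H) := by
  obtain ⟨w, hw⟩ := hB b hb
  let f : Subalgebra.toSubmodule B →ₗ[k] H :=
    (LinearMap.id - Algebra.linearMap k H ∘ₗ counit) ∘ₗ (Subalgebra.toSubmodule B).subtype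
  have hf : range f ≤ HSplus k H B := by
    rintro _ ⟨b', rfl⟩
    simpa [f, Algebra.algebraMap_eq_smul_one] using
      mul_mem_HSplus 1
        (sub_counit_smul_one_mem_plusPart (V := Subalgebra.toSubmodule B) B.one_mem b'.2)
  refine range_rTensor_le_of_range_le hf ⟨w, ?_⟩
  have hw' : (Subalgebra.toSubmodule B).subtype.rTensor H w = comul b := hw
  rw [rTensor_comp, comp_apply, hw', rTensor_sub, LinearMap.sub_apply, rTensor_id, id_apply,
    rTensor_comp, comp_apply, rTensor_counit_comul, rTensor_tmul, Algebra.linearMap_apply, map_one]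

include hB in
lemma isLeftIdealCoideal_HSplus : IsLeftIdealCoideal k H (HSplus k H B) where
  mul_mem_left := HSplus_mul_mem _
  counit_zero _ := counit_eq_zero_of_mem_HSplus
  comul_mem x hx := by
    induction hx using Submodule.span_induction with
    | mem z hz =>
      obtain ⟨g, b, hb, rfl⟩ := hz
      have h : comul (R := k) (g * b) = comul g * (comul b - 1 ⊗ₜ b) + comul g * (1 ⊗ₜ b) := by
        simp [mul_sub]
      have hb' : b ∈ HSplus k H B := by simpa using mul_mem_HSplus 1 hb
      rw [h]
      exact add_mem
        (Submodule.mem_sup_left (mul_mem_range_rTensor_subtype (HSplus_mul_mem _) _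
          (comul_sub_one_tmul_mem hB hb.1)))
        (Submodule.mem_sup_right (mul_mem_range_lTensor_subtype (HSplus_mul_mem _) _
          ⟨1 ⊗ₜ ⟨b, hb'⟩, rfl⟩))
    | zero => simp
    | add u v _ _ hu hv => rw [map_add]; exact add_mem hu hv
    | smul c u _ hu => rw [map_smul]; exact Submodule.smul_mem _ c hu

include hB in
lemma galoisMap_mem_of_mem_JB {z : H ⊗[k] H} (hz : z ∈ JB k H B) :
    galoisMap k H z ∈ range ((HSplus k H B).subtype.rTensor H) := by
  induction hz using Submodule.span_induction with
  | mem z hz =>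
    obtain ⟨x, y, b, hb, rfl⟩ := hz
    rw [galoisMap_mul_tmul_sub_tmul_mul]
    exact mul_one_tmul_mem_range_rTensor_subtype
      (mul_mem_range_rTensor_subtype (HSplus_mul_mem _) _ (comul_sub_one_tmul_mem hB hb)) y
  | zero => simp
  | add u v _ _ hu hv => rw [map_add]; exact add_mem hu hv
  | smul c u _ hu => rw [map_smul]; exact Submodule.smul_mem _ c hu

include hB in
lemma galoisInv_mul_tmul_mem_JB {b : H} (hb : b ∈ plusPart k H B) (g v : H) :
    galoisInv k H ((g * b) ⊗ₜ v) ∈ JB k H B := by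
  obtain ⟨rb, hrb⟩ := exists_repr_left_mem hB hb.1
  let rg := ℛ k g
  -- As `b₍₁₎ ∈ B`, `g₍₁₎b₍₁₎ ⊗ S(b₍₂₎)S(g₍₂₎)v ≡ g₍₁₎ ⊗ b₍₁₎S(b₍₂₎)S(g₍₂₎)v` modulo `J_B`,
  -- and the right-hand sides add up to `ε(b) ∑ g₍₁₎ ⊗ S(g₍₂₎)v = 0`.
  have hzero : ∑ i ∈ rg.index, ∑ j ∈ rb.index, rg.left i ⊗ₜ[k]
      (rb.left j * (antipode k (rb.right j) * (antipode k (rg.right i) * v))) = 0 := by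
    refine Finset.sum_eq_zero fun i _ => ?_
    simp_rw [← mul_assoc, ← TensorProduct.tmul_sum, ← Finset.sum_mul, sum_mul_antipode_eq_smul rb,
      hb.2, zero_smul, zero_mul, TensorProduct.tmul_zero]
  have h : galoisInv k H ((g * b) ⊗ₜ v) =
      ∑ i ∈ rg.index, ∑ j ∈ rb.index,
        ((rg.left i * rb.left j) ⊗ₜ[k] (antipode k (rb.right j) * (antipode k (rg.right i) * v)) -
          rg.left i ⊗ₜ[k] (rb.left j * (antipode k (rb.right j) * (antipode k (rg.right i) * v)))) +
      ∑ i ∈ rg.index, ∑ j ∈ rb.index, rg.left i ⊗ₜ[k]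
        (rb.left j * (antipode k (rb.right j) * (antipode k (rg.right i) * v))) := by
    rw [galoisInv_tmul (rg.mul rb), Coalgebra.Repr.mul_index, Finset.sum_product,
      ← Finset.sum_add_distrib]
    refine Finset.sum_congr rfl fun i _ => ?_
    rw [← Finset.sum_add_distrib]
    refine Finset.sum_congr rfl fun j _ => ?_
    simp [antipode_mul_antidistrib, mul_assoc]
  rw [h, hzero, add_zero]
  exact Submodule.sum_mem _ fun i _ => Submodule.sum_mem _ fun j hj =>
    Submodule.subset_span ⟨_, _, _, hrb j hj, rfl⟩

include hB in
lemma mem_JB_iff_galoisMap_mem (z : H ⊗[k] H) :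
    z ∈ JB k H B ↔ galoisMap k H z ∈ range ((HSplus k H B).subtype.rTensor H) := by
  refine ⟨galoisMap_mem_of_mem_JB hB, fun hz => ?_⟩
  have hle : range ((HSplus k H B).subtype.rTensor H) ≤ (JB k H B).comap (galoisInv k H) := by
    rw [rTensor, TensorProduct.range_map_eq_span_tmul, Submodule.span_le]
    rintro _ ⟨⟨w, hw⟩, v, rfl⟩
    have hspan : HSplus k H B ≤
        (JB k H B).comap (galoisInv k H ∘ₗ (TensorProduct.mk k H H).flip v) :=
      Submodule.span_le.mpr fun _ ⟨g, b, hb, hz⟩ => hz ▸ galoisInv_mul_tmul_mem_JB hB hb g v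
    exact hspan hw
  simpa only [Submodule.mem_comap, galoisInv_galoisMap z] using hle hz

include hB in
lemma equalizer_set_eq_coinv :
    {h : H | h ⊗ₜ[k] (1 : H) - (1 : H) ⊗ₜ[k] h ∈ JB k H B} = coinv k H (HSplus k H B) := by
  ext h
  rw [Set.mem_ofPred_eq, mem_JB_iff_galoisMap_mem hB, galoisMap_tmul_one_sub_one_tmul,
    SetLike.mem_coe, mem_coinv_iff]

end CoidealSubalgebra

/-- `Ψ(I) = H^{co H/I}` and `Φ(B) = HB⁺` are mutually inverse,
inclusion-preserving bijections between left ideal coideals satisfying the coequalizer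
condition and right coideal subalgebras satisfying the equalizer condition. -/
theorem galois_correspondence (k H : Type*) [Field k] [Ring H] [HopfAlgebra k H] :
    (∀ I : Submodule k H, IsLeftIdealCoideal k H I → coequalizerCond k H I →
      ∃ B : Subalgebra k H, Subalgebra.toSubmodule B = coinv k H I ∧
        IsRightCoidealSubalgebra k H B ∧ equalizerCond k H (B : Set H) ∧
        HSplus k H (B : Set H) = I) ∧
    (∀ B : Subalgebra k H, IsRightCoidealSubalgebra k H B → equalizerCond k H (B : Set H) →
      IsLeftIdealCoideal k H (HSplus k H (B : Set H)) ∧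
        coequalizerCond k H (HSplus k H (B : Set H)) ∧
        ((coinv k H (HSplus k H (B : Set H)) : Submodule k H) : Set H) = (B : Set H)) ∧
    (∀ I I' : Submodule k H,
      IsLeftIdealCoideal k H I → coequalizerCond k H I →
      IsLeftIdealCoideal k H I' → coequalizerCond k H I' →
      I ≤ I' → coinv k H I ≤ coinv k H I') ∧
    (∀ B B' : Subalgebra k H,
      IsRightCoidealSubalgebra k H B → equalizerCond k H (B : Set H) →
      IsRightCoidealSubalgebra k H B' → equalizerCond k H (B' : Set H) →
      B ≤ B' → HSplus k H (B : Set H) ≤ HSplus k H (B' : Set H)) := by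
  refine ⟨fun I hI hcoeq => ?_, fun B hB hBeq => ?_, fun I I' _ _ _ _ h => coinv_mono h,
    fun B B' _ _ _ _ h => HSplus_mono h⟩
  · let B := (coinv k H I).toSubalgebra one_mem_coinv fun _ _ => mul_mem_coinv hI.mul_mem_left
    have hB : IsRightCoidealSubalgebra k H B := fun _ => comul_mem_coinv
    have hHB : HSplus k H B = I := (map_eps_cotensor hI.mul_mem_left).symm.trans hcoeq.symm
    refine ⟨B, rfl, hB, ?_, hHB⟩
    rw [equalizerCond, equalizer_set_eq_coinv hB, hHB]
    rfl
  · have hcoinv : (coinv k H (HSplus k H B) : Set H) = B :=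
      (equalizer_set_eq_coinv hB).symm.trans hBeq
    have hlic := isLeftIdealCoideal_HSplus hB
    refine ⟨hlic, ?_, hcoinv⟩
    rw [coequalizerCond, map_eps_cotensor hlic.mul_mem_left, hcoinv]

end HopfGalois
end
end

section
/- Let k be a field, H a Hopf algebra over k, and B a right coideal subalgebra of H. Then the left ideal HB⁺ equals the subspace of H spanned by {Σᵢ ε(xᵢ)yᵢ − Σᵢ xᵢε(yᵢ) : Σᵢ xᵢ ⊗ yᵢ ∈ H □^{H/HB⁺} H}; equivalently, the quotient map H → H/HB⁺ is the coequalizer (in vector spaces) of the two maps ε ⊗ id and id ⊗ ε restricted to the cotensor product H □^{H/HB⁺} H. -/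
open TensorProduct

noncomputable section

namespace HopfGalois

variable (k : Type*) (H : Type*) [Field k] [Ring H] [HopfAlgebra k H]

/-!
Applying `ε ⊗ id ⊗ ε` to the defining identity of `H □^{H/I} H` shows that
`(ε ⊗ id - id ⊗ ε)(H □^{H/I} H) ⊆ I` for every subspace `I`. Conversely, for `I = HB⁺` and
`b ∈ B` we have `π(x b) = ε(b) π(x)`; together with `Δ(B) ⊆ B ⊗ H` this makes right
multiplication by `b` colinear for the left coaction `(π ⊗ id) ∘ Δ` of `H/I` on `H`, so by
coassociativity `Σ x₍₁₎ ⊗ x₍₂₎ b` lies in the cotensor product. For `b ∈ B⁺` its image is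
`x b - ε(b) x = x b`.
-/

open Coalgebra
open LinearMap (lTensor rTensor mulRight)

section

variable {k H}

@[simp]
lemma epsTensorId_tmul (x y : H) : epsTensorId k H (x ⊗ₜ y) = counit (R := k) x • y := by
  simp [epsTensorId]

@[simp]
lemma idTensorEps_tmul (x y : H) : idTensorEps k H (x ⊗ₜ y) = counit (R := k) y • x := by
  simp [idTensorEps]

@[simp]
lemma epsTensorId_comul (x : H) : epsTensorId k H (comul (R := k) x) = x := by
  simp [epsTensorId, ← LinearMap.rTensor_def]

@[simp]
lemma idTensorEps_comul (x : H) : idTensorEps k H (comul (R := k) x) = x := by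
  simp [idTensorEps, ← LinearMap.lTensor_def]

def counitTensorCounit (I : Submodule k H) : H ⊗[k] ((H ⧸ I) ⊗[k] H) →ₗ[k] H ⧸ I :=
  (TensorProduct.lid k (H ⧸ I)).toLinearMap ∘ₗ
    TensorProduct.map counit ((TensorProduct.rid k (H ⧸ I)).toLinearMap ∘ₗ lTensor _ counit)

@[simp]
lemma counitTensorCounit_tmul (I : Submodule k H) (x : H) (q : H ⧸ I) (y : H) :
    counitTensorCounit I (x ⊗ₜ (q ⊗ₜ y)) = (counit (R := k) x * counit (R := k) y) • q := by
  simp [counitTensorCounit, mul_smul, smul_comm (counit (R := k) x)]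

lemma counitTensorCounit_cotensorL (I : Submodule k H) (w : H ⊗[k] H) :
    counitTensorCounit I (cotensorL k H I w) = I.mkQ (idTensorEps k H w) := by
  induction w using TensorProduct.induction_on with
  | zero => simp
  | tmul x y =>
    conv_rhs => rw [idTensorEps_tmul, ← sum_counit_smul (ℛ k x)]
    simp [cotensorL, ← (ℛ k x).eq, TensorProduct.sum_tmul, map_sum, Finset.smul_sum, mul_smul,
      smul_comm (counit (R := k) y)]
  | add v w hv hw => simp only [map_add, hv, hw]

lemma counitTensorCounit_cotensorR (I : Submodule k H) (w : H ⊗[k] H) :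
    counitTensorCounit I (cotensorR k H I w) = I.mkQ (epsTensorId k H w) := by
  induction w using TensorProduct.induction_on with
  | zero => simp
  | tmul x y =>
    have hy := idTensorEps_comul (k := k) y
    rw [← (ℛ k y).eq, map_sum] at hy
    conv_rhs => rw [epsTensorId_tmul, ← hy]
    simp [cotensorR, ← (ℛ k y).eq, TensorProduct.tmul_sum, map_sum, Finset.smul_sum, mul_smul]
  | add v w hv hw => simp only [map_add, hv, hw]

lemma map_cotensor_le (I : Submodule k H) :
    (cotensor k H I).map (epsTensorId k H - idTensorEps k H) ≤ I := by
  rintro _ ⟨w, hw, rfl⟩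
  have hLR : cotensorL k H I w = cotensorR k H I w := sub_eq_zero.mp hw
  have h := congrArg (counitTensorCounit I) hLR
  rw [counitTensorCounit_cotensorL, counitTensorCounit_cotensorR] at h
  rw [← Submodule.Quotient.mk_eq_zero, LinearMap.sub_apply, Submodule.Quotient.mk_sub]
  exact sub_eq_zero.mpr h.symm

lemma cotensorL_eq (I : Submodule k H) :
    cotensorL k H I = lTensor H (map I.mkQ LinearMap.id) ∘ₗ
      (TensorProduct.assoc k H H H).toLinearMap ∘ₗ rTensor H comul :=
  rfl

lemma cotensorR_eq (I : Submodule k H) :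
    cotensorR k H I = lTensor H (map I.mkQ LinearMap.id ∘ₗ comul) :=
  rfl

lemma lTensor_comul_mem_cotensor (I : Submodule k H) (T : H →ₗ[k] H)
    (hT : ∀ y, map I.mkQ LinearMap.id (comul (T y)) =
      map I.mkQ LinearMap.id (lTensor H T (comul y))) (x : H) :
    lTensor H T (comul x) ∈ cotensor k H I := by
  have hR : cotensorR k H I ∘ₗ lTensor H T ∘ₗ comul
      = lTensor H (map I.mkQ LinearMap.id ∘ₗ lTensor H T ∘ₗ comul) ∘ₗ comul := by
    rw [cotensorR_eq, ← LinearMap.comp_assoc, ← LinearMap.lTensor_comp]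
    congr 2
    exact LinearMap.ext hT
  have hL : cotensorL k H I ∘ₗ lTensor H T ∘ₗ comul
      = lTensor H (map I.mkQ LinearMap.id ∘ₗ lTensor H T ∘ₗ comul) ∘ₗ comul := by
    have hassoc : (TensorProduct.assoc k H H H).toLinearMap ∘ₗ lTensor (H ⊗[k] H) T
        = lTensor H (lTensor H T) ∘ₗ (TensorProduct.assoc k H H H).toLinearMap := by
      apply TensorProduct.ext_threefold
      intro x y z
      simp
    calc cotensorL k H I ∘ₗ lTensor H T ∘ₗ comul
        = lTensor H (map I.mkQ LinearMap.id) ∘ₗ ((TensorProduct.assoc k H H H).toLinearMap ∘ₗ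
            lTensor (H ⊗[k] H) T) ∘ₗ rTensor H comul ∘ₗ comul := by
          rw [cotensorL_eq]
          simp only [LinearMap.comp_assoc]
          congr 2
          rw [← LinearMap.comp_assoc, ← LinearMap.comp_assoc, LinearMap.rTensor_comp_lTensor,
            LinearMap.lTensor_comp_rTensor]
      _ = lTensor H (map I.mkQ LinearMap.id ∘ₗ lTensor H T) ∘ₗ
            ((TensorProduct.assoc k H H H).toLinearMap ∘ₗ rTensor H comul ∘ₗ comul) := by
          rw [hassoc, LinearMap.lTensor_comp]
          simp only [LinearMap.comp_assoc]
      _ = lTensor H (map I.mkQ LinearMap.id ∘ₗ lTensor H T ∘ₗ comul) ∘ₗ comul := by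
          rw [coassoc, ← LinearMap.comp_assoc, ← LinearMap.lTensor_comp, LinearMap.comp_assoc]
  rw [cotensor, LinearMap.mem_ker, LinearMap.sub_apply, sub_eq_zero]
  exact congr($hL x).trans congr($hR x).symm

lemma epsTensorId_lTensor (f : H →ₗ[k] H) (w : H ⊗[k] H) :
    epsTensorId k H (lTensor H f w) = f (epsTensorId k H w) := by
  induction w using TensorProduct.induction_on with
  | zero => simp
  | tmul x y => simp
  | add v w hv hw => simp only [map_add, hv, hw]

lemma idTensorEps_lTensor_mulRight (b : H) (w : H ⊗[k] H) :
    idTensorEps k H (lTensor H (mulRight k b) w) =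
      counit (R := k) b • idTensorEps k H w := by
  induction w using TensorProduct.induction_on with
  | zero => simp
  | tmul x y => simp [mul_comm, mul_smul]
  | add v w hv hw => simp only [map_add, hv, hw, smul_add]

variable {B : Subalgebra k H}

lemma HSplus_mkQ_mul_of_mem {b : H} (hb : b ∈ B) (x : H) :
    (HSplus k H B).mkQ (x * b) = counit (R := k) b • (HSplus k H B).mkQ x := by
  have hb' : b - algebraMap k H (counit (R := k) b) ∈ plusPart k H B :=
    ⟨sub_mem hb (B.algebraMap_mem _), by simp⟩
  have hmem : x * (b - algebraMap k H (counit (R := k) b)) ∈ HSplus k H B :=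
    Submodule.subset_span ⟨x, _, hb', rfl⟩
  rw [mul_sub, Algebra.algebraMap_eq_smul_one, mul_smul_comm, mul_one] at hmem
  rw [← map_smul, ← sub_eq_zero, ← map_sub, Submodule.mkQ_apply, Submodule.Quotient.mk_eq_zero]
  exact hmem

lemma map_mkQ_tmul_mul_of_mem_range {v : H ⊗[k] H}
    (hv : v ∈ LinearMap.range (map (Subalgebra.toSubmodule B).subtype LinearMap.id)) (x y : H) :
    map (HSplus k H B).mkQ LinearMap.id ((x ⊗ₜ y) * v)
      = (HSplus k H B).mkQ x ⊗ₜ (y * epsTensorId k H v) := by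
  obtain ⟨t, rfl⟩ := hv
  induction t using TensorProduct.induction_on with
  | zero => simp
  | tmul b h => simp [HSplus_mkQ_mul_of_mem b.2, TensorProduct.smul_tmul]
  | add t t' ht ht' => simp only [map_add, mul_add, ht, ht', TensorProduct.tmul_add]

lemma map_mkQ_comul_mul (hB : IsRightCoidealSubalgebra k H B) {b : H} (hb : b ∈ B) (y : H) :
    map (HSplus k H B).mkQ LinearMap.id (comul (y * b))
      = map (HSplus k H B).mkQ LinearMap.id (lTensor H (mulRight k b) (comul y)) := by
  rw [Bialgebra.comul_mul]
  induction comul (R := k) y using TensorProduct.induction_on with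
  | zero => simp
  | tmul x z => simp [map_mkQ_tmul_mul_of_mem_range (hB b hb)]
  | add u v hu hv => simp only [add_mul, map_add, hu, hv]

end

/-- For a right coideal subalgebra `B`, the left ideal `HB⁺` equals
the subspace spanned by `{Σ ε(xᵢ)yᵢ − Σ xᵢε(yᵢ) : Σ xᵢ ⊗ yᵢ ∈ H □^{H/HB⁺} H}`, i.e.
`H → H/HB⁺` coequalizes `ε ⊗ id` and `id ⊗ ε` on the cotensor product. -/
theorem HSplus_coequalizerCond (k H : Type*) [Field k] [Ring H] [HopfAlgebra k H]
    (B : Subalgebra k H) (hB : IsRightCoidealSubalgebra k H B) :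
    coequalizerCond k H (HSplus k H (B : Set H)) := by
  refine le_antisymm (Submodule.span_le.mpr ?_) (map_cotensor_le _)
  rintro _ ⟨x, b, ⟨hbB, hb⟩, rfl⟩
  refine ⟨lTensor H (mulRight k b) (comul x),
    lTensor_comul_mem_cotensor _ _ (map_mkQ_comul_mul hB hbB) x, ?_⟩
  simp [epsTensorId_lTensor, idTensorEps_lTensor_mulRight, hb]

end HopfGalois
end
end

section
/- Let k be a field, H a Hopf algebra over k with antipode S, and I a left ideal coideal of H. Then for every x ∈ H^{co H/I}, the element Σ x₍₁₎ ⊗ S(x₍₂₎) of H ⊗ H lies in the subspace H^{co H/I} ⊗ H, i.e. in the span of simple tensors b ⊗ h with b ∈ H^{co H/I} and h ∈ H. -/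
open TensorProduct

noncomputable section

namespace HopfGalois

variable (k : Type*) (H : Type*) [Field k] [Ring H] [HopfAlgebra k H]

/-!
The coinvariants form the kernel of `f x = Σ π(x₍₁₎) ⊗ x₍₂₎ − π(1) ⊗ x`. Coassociativity gives
`(f ⊗ id)(Δ x) = 0` for every coinvariant `x`, and since `H` is flat over the field `k`, the kernel
of `f ⊗ id` is the image of `H^{co H/I} ⊗ H`; so `Δ x ∈ H^{co H/I} ⊗ H`. Applying `id ⊗ S` acts
only on the second factor and preserves this subspace.
-/

open LinearMap

section TensorMaps

variable {R M N P Q : Type*} [CommRing R] [AddCommGroup M] [Module R M] [AddCommGroup N]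
  [Module R N] [AddCommGroup P] [Module R P] [AddCommGroup Q] [Module R Q]

lemma rTensor_lTensor_comm (f : M →ₗ[R] P) (g : N →ₗ[R] Q) (z : M ⊗[R] N) :
    f.rTensor Q (g.lTensor M z) = g.lTensor P (f.rTensor N z) := by
  rw [← comp_apply, rTensor_comp_lTensor, ← lTensor_comp_rTensor, comp_apply]

lemma lTensor_mem_range_rTensor {f : M →ₗ[R] P} {z : P ⊗[R] N}
    (hz : z ∈ range (f.rTensor N)) (g : N →ₗ[R] Q) :
    g.lTensor P z ∈ range (f.rTensor Q) := by
  obtain ⟨w, rfl⟩ := hz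
  exact ⟨g.lTensor M w, rTensor_lTensor_comm f g w⟩

lemma rTensor_mk_eq_assoc_symm (c : Q) (z : M ⊗[R] N) :
    (TensorProduct.mk R Q M c).rTensor N z = (TensorProduct.assoc R Q M N).symm (c ⊗ₜ z) := by
  induction z using TensorProduct.induction_on with
  | zero => simp
  | tmul a b => rfl
  | add z₁ z₂ h₁ h₂ => simp only [map_add, tmul_add, h₁, h₂]

end TensorMaps

section Coalgebra

variable {R C Q : Type*} [CommRing R] [AddCommGroup C] [Module R C] [Coalgebra R C]
  [AddCommGroup Q] [Module R Q]

def coinvDefect (q : C →ₗ[R] Q) (c : Q) : C →ₗ[R] Q ⊗[R] C :=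
  q.rTensor C ∘ₗ Coalgebra.comul - TensorProduct.mk R Q C c

lemma rTensor_coinvDefect_comul {q : C →ₗ[R] Q} {c : Q} {x : C}
    (hx : x ∈ ker (coinvDefect q c)) :
    (coinvDefect q c).rTensor C (Coalgebra.comul x) = 0 := by
  have hqx : q.rTensor C (Coalgebra.comul x) = c ⊗ₜ x := by
    simpa [coinvDefect, sub_eq_zero] using hx
  have hcoassoc : (q.rTensor C ∘ₗ Coalgebra.comul).rTensor C (Coalgebra.comul x) =
      (TensorProduct.assoc R Q C C).symm (c ⊗ₜ Coalgebra.comul x) := calc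
    _ = (q.rTensor C).rTensor C ((TensorProduct.assoc R C C C).symm
          (Coalgebra.comul.lTensor C (Coalgebra.comul x))) := by
        rw [rTensor_comp_apply, Coalgebra.coassoc_symm_apply]
    _ = (TensorProduct.assoc R Q C C).symm
          (Coalgebra.comul.lTensor Q (q.rTensor C (Coalgebra.comul x))) := by
        have hnat := map_map_assoc_symm q id id (Coalgebra.comul.lTensor C (Coalgebra.comul x))
        rw [map_id] at hnat
        rw [← rTensor_lTensor_comm]
        exact hnat
    _ = _ := by rw [hqx, lTensor_tmul]
  rw [coinvDefect, rTensor_sub, LinearMap.sub_apply, hcoassoc, rTensor_mk_eq_assoc_symm,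
    sub_self]

lemma comul_mem_range_rTensor_ker_coinvDefect [Module.Flat R C] {q : C →ₗ[R] Q} {c : Q} {x : C}
    (hx : x ∈ ker (coinvDefect q c)) :
    Coalgebra.comul x ∈ range ((ker (coinvDefect q c)).subtype.rTensor C) :=
  (Module.Flat.rTensor_exact C (exact_subtype_ker_map _) _).mp (rTensor_coinvDefect_comul hx)

end Coalgebra

lemma coinv_eq_ker_coinvDefect (I : Submodule k H) : coinv k H I = ker (coinvDefect I.mkQ (I.mkQ 1)) :=
  rfl

theorem comul_antipode_mem_coinv_tensor_general (k H : Type*) [Field k] [Ring H] [HopfAlgebra k H]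
    (I : Submodule k H)
    (x : H) (hx : x ∈ coinv k H I) :
    TensorProduct.map (LinearMap.id : H →ₗ[k] H) (HopfAlgebra.antipode k : H →ₗ[k] H)
        ((Coalgebra.comul : H →ₗ[k] H ⊗[k] H) x) ∈
      LinearMap.range
        (TensorProduct.map (coinv k H I).subtype (LinearMap.id : H →ₗ[k] H)) := by
  rw [coinv_eq_ker_coinvDefect] at hx ⊢
  exact lTensor_mem_range_rTensor (comul_mem_range_rTensor_ker_coinvDefect hx)
    (HopfAlgebra.antipode k)

/-- For a left ideal coideal `I` and `x ∈ H^{co H/I}`, the element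
`Σ x₍₁₎ ⊗ S(x₍₂₎)` lies in the subspace `H^{co H/I} ⊗ H` of `H ⊗ H`. -/
theorem comul_antipode_mem_coinv_tensor (k H : Type*) [Field k] [Ring H] [HopfAlgebra k H]
    (I : Submodule k H) (hI : IsLeftIdealCoideal k H I)
    (x : H) (hx : x ∈ coinv k H I) :
    TensorProduct.map (LinearMap.id : H →ₗ[k] H) (HopfAlgebra.antipode k : H →ₗ[k] H)
        ((Coalgebra.comul : H →ₗ[k] H ⊗[k] H) x) ∈
      LinearMap.range
        (TensorProduct.map (coinv k H I).subtype (LinearMap.id : H →ₗ[k] H)) :=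
  comul_antipode_mem_coinv_tensor_general k H I x hx

end HopfGalois
end
end
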